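/- arXiv:2304.04530 — 2 statements merged into one kernel-verified Lean document; each statement's English description precedes it below -/
import Mathlib

section
/- Let γ = (γ₁, γ₂) : ℝ → ℝ² be real-analytic, unit-speed, positively oriented and strictly convex, let τ₀ satisfy γ₂'(τ₀) < 0, and set κ(τ) := √(γ₁''(τ)² + γ₂''(τ)²). Define x(τ) := γ₁(τ₀) + (γ₁'(τ₀)/γ₂'(τ₀))·(γ₂(τ) − γ₂(τ₀)). Then, as τ → τ₀, one has the second-order Taylor expansion (γ₁(τ) − x(τ)) − (κ(τ₀)/(2|γ₂'(τ₀)|))·(τ − τ₀)² = O(|τ − τ₀|³); i.e., the left-hand side is big-O of |τ − τ₀|³ along the filter 𝓝 τ₀. -/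
/-! With `c = κ(τ₀)/(2|γ₂'(τ₀)|)`, the function `F(τ) = γ₁(τ) − x(τ) − c(τ − τ₀)²` is smooth and
vanishes to second order at `τ₀`. `F'(τ₀) = 0` because the chord points along the tangent, and
`F''(τ₀) = γ₁'' − (γ₁'/γ₂')γ₂'' − 2c = 0` because for a unit-speed curve `γ'' ⊥ γ'`, so that
`κ = |γ₁'γ₂'' − γ₂'γ₁''|`, which is the convexity determinant. Taylor's theorem then gives
`F = O(|τ − τ₀|³)`. -/

open Topology Asymptotics

/-- The curvature `κ(τ) := √(γ₁''(τ)² + γ₂''(τ)²)` of a unit-speed planar curve. -/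
noncomputable def curvature (γ₁ γ₂ : ℝ → ℝ) (τ : ℝ) : ℝ :=
  Real.sqrt ((deriv (deriv γ₁) τ) ^ 2 + (deriv (deriv γ₂) τ) ^ 2)

/-- The `x`-coordinate `x(τ) := γ₁(τ₀) + (γ₁'(τ₀)/γ₂'(τ₀))(γ₂(τ) − γ₂(τ₀))` of the point of
the tangent-plane chord at height `γ₂(τ)`. -/
noncomputable def chordX (γ₁ γ₂ : ℝ → ℝ) (τ₀ τ : ℝ) : ℝ :=
  γ₁ τ₀ + (deriv γ₁ τ₀ / deriv γ₂ τ₀) * (γ₂ τ - γ₂ τ₀)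

open scoped Nat in
theorem ContDiff.isBigO_pow_of_iteratedDeriv_eq_zero {E : Type*} [NormedAddCommGroup E]
    [NormedSpace ℝ E] {f : ℝ → E} {x₀ : ℝ} {n : ℕ} (hf : ContDiff ℝ (n + 1) f)
    (hvanish : ∀ k ≤ n, iteratedDeriv k f x₀ = 0) :
    f =O[𝓝 x₀] fun x => (x - x₀) ^ (n + 1) := by
  set v := ((n + 1 : ℝ) * n !)⁻¹ • iteratedDeriv (n + 1) f x₀
  have htaylor (x : ℝ) : taylorWithinEval f (n + 1) Set.univ x₀ x = (x - x₀) ^ (n + 1) • v := by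
    rw [taylorWithinEval_succ, taylor_within_apply, Finset.sum_eq_zero, zero_add,
      iteratedDerivWithin_univ, mul_comm, mul_smul]
    intro k hk
    rw [iteratedDerivWithin_univ, hvanish k (Nat.lt_succ_iff.mp (Finset.mem_range.mp hk)),
      smul_zero]
  have hremainder :=
    (taylor_isLittleO_univ (x₀ := x₀) (n := n + 1) (by exact_mod_cast hf)).isBigO
  have hpoly : (fun x => taylorWithinEval f (n + 1) Set.univ x₀ x) =O[𝓝 x₀]
      fun x => (x - x₀) ^ (n + 1) :=
    .of_bound ‖v‖ (.of_forall fun x => by rw [htaylor, norm_smul, mul_comm])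
  simpa using hremainder.add hpoly

section UnitSpeed

variable {γ₁ γ₂ : ℝ → ℝ} {τ : ℝ}

theorem deriv_mul_deriv_deriv_add_eq_zero (hunit : ∀ τ, deriv γ₁ τ ^ 2 + deriv γ₂ τ ^ 2 = 1)
    (h₁ : DifferentiableAt ℝ (deriv γ₁) τ) (h₂ : DifferentiableAt ℝ (deriv γ₂) τ) :
    deriv γ₁ τ * deriv (deriv γ₁) τ + deriv γ₂ τ * deriv (deriv γ₂) τ = 0 := by
  have hsum := (h₁.hasDerivAt.pow 2).add (h₂.hasDerivAt.pow 2)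
  rw [show deriv γ₁ ^ 2 + deriv γ₂ ^ 2 = fun _ => 1 from funext hunit] at hsum
  have := hsum.unique (hasDerivAt_const τ 1)
  push_cast at this
  linarith

theorem curvature_eq_abs_cross (hunit : ∀ τ, deriv γ₁ τ ^ 2 + deriv γ₂ τ ^ 2 = 1)
    (h₁ : DifferentiableAt ℝ (deriv γ₁) τ) (h₂ : DifferentiableAt ℝ (deriv γ₂) τ) :
    curvature γ₁ γ₂ τ = |deriv γ₁ τ * deriv (deriv γ₂) τ - deriv γ₂ τ * deriv (deriv γ₁) τ| := by
  have horth := deriv_mul_deriv_deriv_add_eq_zero hunit h₁ h₂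
  -- Lagrange's identity `(a² + b²)(c² + d²) = (ac + bd)² + (ad − bc)²`
  have hlagrange : deriv (deriv γ₁) τ ^ 2 + deriv (deriv γ₂) τ ^ 2 =
      (deriv γ₁ τ * deriv (deriv γ₂) τ - deriv γ₂ τ * deriv (deriv γ₁) τ) ^ 2 := by
    linear_combination -(deriv (deriv γ₁) τ ^ 2 + deriv (deriv γ₂) τ ^ 2) * hunit τ
      + (deriv γ₁ τ * deriv (deriv γ₁) τ + deriv γ₂ τ * deriv (deriv γ₂) τ) * horth
  rw [curvature, hlagrange, Real.sqrt_sq_eq_abs]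

theorem curvature_div_abs_deriv_eq (hunit : ∀ τ, deriv γ₁ τ ^ 2 + deriv γ₂ τ ^ 2 = 1)
    (h₁ : DifferentiableAt ℝ (deriv γ₁) τ) (h₂ : DifferentiableAt ℝ (deriv γ₂) τ)
    (hconv : 0 < deriv γ₁ τ * deriv (deriv γ₂) τ - deriv γ₂ τ * deriv (deriv γ₁) τ)
    (hdesc : deriv γ₂ τ < 0) :
    curvature γ₁ γ₂ τ / |deriv γ₂ τ| =
      deriv (deriv γ₁) τ - deriv γ₁ τ / deriv γ₂ τ * deriv (deriv γ₂) τ := by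
  rw [curvature_eq_abs_cross hunit h₁ h₂, abs_of_pos hconv, abs_of_neg hdesc]
  field_simp [hdesc.ne]
  ring

end UnitSpeed

section ChordGap

variable {γ₁ γ₂ : ℝ → ℝ} (τ₀ c : ℝ)

theorem hasDerivAt_sub_chordX_sub_mul_sq {τ v₁ v₂ : ℝ} (h₁ : HasDerivAt γ₁ v₁ τ)
    (h₂ : HasDerivAt γ₂ v₂ τ) :
    HasDerivAt (fun τ => (γ₁ τ - chordX γ₁ γ₂ τ₀ τ) - c * (τ - τ₀) ^ 2)
      (v₁ - deriv γ₁ τ₀ / deriv γ₂ τ₀ * v₂ - 2 * c * (τ - τ₀)) τ := by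
  have hchord :=
    ((h₂.sub_const (γ₂ τ₀)).const_mul (deriv γ₁ τ₀ / deriv γ₂ τ₀)).const_add (γ₁ τ₀)
  have hsq := (((hasDerivAt_id τ).sub_const τ₀).pow 2).const_mul c
  exact ((h₁.sub hchord).sub hsq).congr_deriv (by simp; ring)

theorem deriv_sub_chordX_sub_mul_sq (h₁ : Differentiable ℝ γ₁) (h₂ : Differentiable ℝ γ₂) :
    deriv (fun τ => (γ₁ τ - chordX γ₁ γ₂ τ₀ τ) - c * (τ - τ₀) ^ 2) =
      fun τ => deriv γ₁ τ - deriv γ₁ τ₀ / deriv γ₂ τ₀ * deriv γ₂ τ - 2 * c * (τ - τ₀) :=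
  funext fun τ =>
    (hasDerivAt_sub_chordX_sub_mul_sq τ₀ c (h₁ τ).hasDerivAt (h₂ τ).hasDerivAt).deriv

theorem deriv_deriv_sub_chordX_sub_mul_sq (h₁ : Differentiable ℝ γ₁)
    (h₂ : Differentiable ℝ γ₂) (h₁' : DifferentiableAt ℝ (deriv γ₁) τ₀)
    (h₂' : DifferentiableAt ℝ (deriv γ₂) τ₀) :
    deriv (deriv (fun τ => (γ₁ τ - chordX γ₁ γ₂ τ₀ τ) - c * (τ - τ₀) ^ 2)) τ₀ =
      deriv (deriv γ₁) τ₀ - deriv γ₁ τ₀ / deriv γ₂ τ₀ * deriv (deriv γ₂) τ₀ - 2 * c := by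
  rw [deriv_sub_chordX_sub_mul_sq τ₀ c h₁ h₂]
  have hlin := ((hasDerivAt_id τ₀).sub_const τ₀).const_mul (2 * c)
  exact (((h₁'.hasDerivAt.sub (h₂'.hasDerivAt.const_mul _)).sub hlin).congr_deriv
    (by rw [mul_one])).deriv

end ChordGap

/-- **Second-order Taylor expansion of the gap `γ₁ − x`.**
For a real-analytic, unit-speed, positively oriented strictly convex planar curve with
`γ₂'(τ₀) < 0`, one has
`(γ₁(τ) − x(τ)) − (κ(τ₀)/(2|γ₂'(τ₀)|))(τ − τ₀)² = O(|τ − τ₀|³)` as `τ → τ₀`. -/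
theorem gap_expansion_isBigO
    (γ₁ γ₂ : ℝ → ℝ)
    (hγ₁ : AnalyticOnNhd ℝ γ₁ Set.univ) (hγ₂ : AnalyticOnNhd ℝ γ₂ Set.univ)
    (hunit : ∀ τ, (deriv γ₁ τ) ^ 2 + (deriv γ₂ τ) ^ 2 = 1)
    (hconv : ∀ τ, 0 < deriv γ₁ τ * deriv (deriv γ₂) τ - deriv γ₂ τ * deriv (deriv γ₁) τ)
    (τ₀ : ℝ) (hγ₂' : deriv γ₂ τ₀ < 0) :
    (fun τ => (γ₁ τ - chordX γ₁ γ₂ τ₀ τ)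
        - (curvature γ₁ γ₂ τ₀ / (2 * |deriv γ₂ τ₀|)) * (τ - τ₀) ^ 2)
      =O[𝓝 τ₀] (fun τ => |τ - τ₀| ^ 3) := by
  have h₁ : ContDiff ℝ 3 γ₁ := hγ₁.contDiff
  have h₂ : ContDiff ℝ 3 γ₂ := hγ₂.contDiff
  have h₁' : DifferentiableAt ℝ (deriv γ₁) τ₀ := (hγ₁.deriv τ₀ trivial).differentiableAt
  have h₂' : DifferentiableAt ℝ (deriv γ₂) τ₀ := (hγ₂.deriv τ₀ trivial).differentiableAt
  have hd₁ : Differentiable ℝ γ₁ := h₁.differentiable (by norm_num)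
  have hd₂ : Differentiable ℝ γ₂ := h₂.differentiable (by norm_num)
  refine (ContDiff.isBigO_pow_of_iteratedDeriv_eq_zero (n := 2) ?_ fun k hk => ?_).abs_right
    |>.congr_right fun τ => abs_pow _ _
  · unfold chordX
    fun_prop
  interval_cases k
  · simp [chordX]
  · rw [iteratedDeriv_one, deriv_sub_chordX_sub_mul_sq _ _ hd₁ hd₂]
    simp [hγ₂'.ne]
  · rw [iteratedDeriv_succ, iteratedDeriv_one,
      deriv_deriv_sub_chordX_sub_mul_sq _ _ hd₁ hd₂ h₁' h₂']
    linear_combination -curvature_div_abs_deriv_eq hunit h₁' h₂' (hconv τ₀) hγ₂'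
end

section
/- Let γ = (γ₁, γ₂) : ℝ → ℝ² be real-analytic, unit-speed, positively oriented and strictly convex, let τ₀ satisfy γ₁(τ₀) > 0, γ₁'(τ₀) < 0 and γ₂'(τ₀) < 0, and set κ(τ) := √(γ₁''(τ)² + γ₂''(τ)²). Define x(τ) := γ₁(τ₀) + (γ₁'(τ₀)/γ₂'(τ₀))·(γ₂(τ) − γ₂(τ₀)) and y(τ) := √(γ₁(τ)² − x(τ)²). Then there exists δ > 0 such that γ₁(τ)² − x(τ)² > 0 for all τ ∈ (τ₀ − δ, τ₀), y is twice differentiable on (τ₀ − δ, τ₀), and as τ → τ₀ from the left, y''(τ) converges to −(γ₁(τ₀)κ'(τ₀)/3 + κ(τ₀)γ₁'(τ₀)) / √(κ(τ₀)·γ₁(τ₀)·|γ₂'(τ₀)|). -/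
/-!
Write `x` for `chordX γ₁ γ₂ τ₀`. The gap `D := γ₁ - x` vanishes to second order at `τ₀`
(the chord is tangent there), so `γ₁² - x² = D (γ₁ + x) = (τ - τ₀)² G` with `G` analytic and
`G(τ₀) = κ γ₁ / |γ₂'| > 0`. Left of `τ₀` this gives `y = (τ₀ - τ) √G`, an analytic function,
whose second derivative at `τ₀` is `-2 (√G)'(τ₀) = -G'(τ₀) / √G(τ₀)`. The Taylor coefficients
of `D` come from `D'' = -κ / γ₂'` and `D''' = -κ' / γ₂'`, where `κ = γ₁'γ₂'' - γ₂'γ₁''`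
for a unit-speed convex curve.
-/

open Topology Filter Set

/-- The height function `y(τ) := √(γ₁(τ)² − x(τ)²)` of the tangent-plane section. -/
noncomputable def sectionY (γ₁ γ₂ : ℝ → ℝ) (τ₀ τ : ℝ) : ℝ :=
  Real.sqrt ((γ₁ τ) ^ 2 - (chordX γ₁ γ₂ τ₀ τ) ^ 2)

theorem AnalyticAt.sqrt {f : ℝ → ℝ} {x : ℝ} (hf : AnalyticAt ℝ f x) (hx : 0 < f x) :
    AnalyticAt ℝ (fun t ↦ √(f t)) x := by
  refine ((hf.log hx).mul (analyticAt_const (v := (1 / 2 : ℝ)))).rexp'.congr ?_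
  filter_upwards [hf.continuousAt.eventually (lt_mem_nhds hx)] with t ht
  rw [Real.sqrt_eq_rpow, Real.rpow_def_of_pos ht]
  rfl

theorem AnalyticAt.exists_eq_sub_sq_mul {𝕜 : Type*} [NontriviallyNormedField 𝕜]
    [CompleteSpace 𝕜] [CharZero 𝕜] {f : 𝕜 → 𝕜} {a : 𝕜} (hf : AnalyticAt 𝕜 f a)
    (h₀ : f a = 0) (h₁ : deriv f a = 0) :
    ∃ g : 𝕜 → 𝕜, AnalyticAt 𝕜 g a ∧ (∀ z, f z = (z - a) ^ 2 * g z) ∧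
      g a = deriv (deriv f) a / 2 ∧ deriv g a = deriv (deriv (deriv f)) a / 6 := by
  have hq := hf.hasFPowerSeriesAt.has_fpower_series_dslope_fslope.has_fpower_series_dslope_fslope
  refine ⟨dslope (dslope f a) a, hq.analyticAt, fun z ↦ ?_, ?_, ?_⟩
  · have e₁ := sub_smul_dslope f a z
    have e₂ := sub_smul_dslope (dslope f a) a z
    rw [dslope_same, h₁, sub_zero, smul_eq_mul] at e₂
    rw [h₀, sub_zero, smul_eq_mul, ← e₂] at e₁
    rw [← e₁]
    ring
  · rw [← hq.coeff_zero 1]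
    simp [iteratedDeriv_succ]
  · rw [hq.deriv]
    simp [iteratedDeriv_succ, Nat.factorial]

theorem Filter.EventuallyEq.eventually_eventuallyEq_nhds_of_isOpen {α β : Type*}
    [TopologicalSpace α] {φ h : α → β} {a : α} {s : Set α} (hs : IsOpen s)
    (hφ : φ =ᶠ[𝓝[s] a] h) : ∀ᶠ τ in 𝓝[s] a, φ =ᶠ[𝓝 τ] h := by
  filter_upwards [eventually_eventually_nhdsWithin.2 hφ, self_mem_nhdsWithin] with τ hτ hτs
  rwa [← hs.nhdsWithin_eq hτs]

theorem tendsto_deriv_deriv_nhdsWithin_of_eventuallyEq {𝕜 : Type*} [NontriviallyNormedField 𝕜]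
    {F : Type*} [NormedAddCommGroup F] [NormedSpace 𝕜 F] [CompleteSpace F] {φ h : 𝕜 → F}
    {a : 𝕜} {s : Set 𝕜} (hs : IsOpen s) (hh : AnalyticAt 𝕜 h a) (hφ : φ =ᶠ[𝓝[s] a] h) :
    (∀ᶠ τ in 𝓝[s] a, DifferentiableAt 𝕜 φ τ ∧ DifferentiableAt 𝕜 (deriv φ) τ) ∧
      Tendsto (deriv (deriv φ)) (𝓝[s] a) (𝓝 (deriv (deriv h) a)) := by
  have hloc : ∀ᶠ τ in 𝓝[s] a, φ =ᶠ[𝓝 τ] h ∧ AnalyticAt 𝕜 h τ :=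
    (hφ.eventually_eventuallyEq_nhds_of_isOpen hs).and
      (nhdsWithin_le_nhds hh.eventually_analyticAt)
  refine ⟨hloc.mono fun τ ⟨hτ, hhτ⟩ ↦ ⟨?_, ?_⟩, ?_⟩
  · exact hhτ.differentiableAt.congr_of_eventuallyEq hτ
  · exact hhτ.deriv.differentiableAt.congr_of_eventuallyEq hτ.deriv
  · refine (hh.deriv.deriv.continuousAt.tendsto.mono_left nhdsWithin_le_nhds).congr' ?_
    exact hloc.mono fun τ ⟨hτ, _⟩ ↦ hτ.deriv.deriv_eq.symm

theorem AnalyticAt.deriv_deriv_sub_mul {𝕜 : Type*} [NontriviallyNormedField 𝕜]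
    [CompleteSpace 𝕜] {s : 𝕜 → 𝕜} {a : 𝕜} (hs : AnalyticAt 𝕜 s a) :
    deriv (deriv fun τ ↦ (a - τ) * s τ) a = -2 * deriv s a := by
  have hderiv : deriv (fun τ ↦ (a - τ) * s τ) =ᶠ[𝓝 a] fun τ ↦ -s τ + (a - τ) * deriv s τ := by
    filter_upwards [hs.eventually_analyticAt] with τ hτ
    exact (((hasDerivAt_id τ).const_sub a).mul hτ.differentiableAt.hasDerivAt).deriv.trans
      (by simp only [id]; ring)
  rw [hderiv.deriv_eq]
  exact (hs.differentiableAt.hasDerivAt.neg.add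
    (((hasDerivAt_id a).const_sub a).mul hs.deriv.differentiableAt.hasDerivAt)).deriv.trans
      (by simp only [id, sub_self]; ring)

theorem tendsto_deriv_deriv_sqrt_nhdsLT {f G : ℝ → ℝ} {a : ℝ} (hG : AnalyticAt ℝ G a)
    (hGa : 0 < G a) (hf : ∀ᶠ τ in 𝓝[<] a, f τ = (τ - a) ^ 2 * G τ) :
    (∀ᶠ τ in 𝓝[<] a, 0 < f τ ∧ DifferentiableAt ℝ (fun t ↦ √(f t)) τ ∧
        DifferentiableAt ℝ (deriv fun t ↦ √(f t)) τ) ∧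
      Tendsto (deriv (deriv fun t ↦ √(f t))) (𝓝[<] a) (𝓝 (-deriv G a / √(G a))) := by
  have hGpos : ∀ᶠ τ in 𝓝[<] a, 0 < G τ :=
    nhdsWithin_le_nhds (hG.continuousAt.eventually (lt_mem_nhds hGa))
  have hsqrt : (fun t ↦ √(f t)) =ᶠ[𝓝[<] a] fun τ ↦ (a - τ) * √(G τ) := by
    filter_upwards [hf, self_mem_nhdsWithin] with τ hτ hτa
    rw [hτ, Real.sqrt_mul (sq_nonneg _), Real.sqrt_sq_eq_abs, abs_of_neg (sub_neg.2 hτa)]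
    ring
  have hh : AnalyticAt ℝ (fun τ ↦ (a - τ) * √(G τ)) a :=
    (analyticAt_const.sub analyticAt_id).mul (hG.sqrt hGa)
  obtain ⟨hdiff, hlim⟩ := tendsto_deriv_deriv_nhdsWithin_of_eventuallyEq isOpen_Iio hh hsqrt
  refine ⟨?_, ?_⟩
  · filter_upwards [hf, hGpos, self_mem_nhdsWithin, hdiff] with τ hτ hGτ hτa hd
    exact ⟨hτ ▸ mul_pos (sq_pos_of_neg (sub_neg.2 hτa)) hGτ, hd⟩
  · convert hlim using 2
    rw [(hG.sqrt hGa).deriv_deriv_sub_mul, (hG.differentiableAt.hasDerivAt.sqrt hGa.ne').deriv]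
    field_simp

theorem deriv_sub_const_mul {u v : ℝ → ℝ} (hu : Differentiable ℝ u) (hv : Differentiable ℝ v)
    (c : ℝ) : deriv (fun τ ↦ u τ - c * v τ) = fun τ ↦ deriv u τ - c * deriv v τ :=
  funext fun τ ↦ ((hu τ).hasDerivAt.sub ((hv τ).hasDerivAt.const_mul c)).deriv

theorem mul_deriv_add_mul_deriv_eq_zero {u v : ℝ → ℝ} {τ : ℝ} (hu : DifferentiableAt ℝ u τ)
    (hv : DifferentiableAt ℝ v τ) (h : ∀ t, u t ^ 2 + v t ^ 2 = 1) :
    u τ * deriv u τ + v τ * deriv v τ = 0 := by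
  have hderiv : HasDerivAt (fun t ↦ u t ^ 2 + v t ^ 2) _ τ :=
    (hu.hasDerivAt.fun_pow 2).add (hv.hasDerivAt.fun_pow 2)
  rw [show (fun t ↦ u t ^ 2 + v t ^ 2) = fun _ ↦ 1 from funext h] at hderiv
  have := hderiv.unique (hasDerivAt_const τ 1)
  norm_num at this
  linarith

theorem div_div_sqrt_div {m : ℝ} (hm : 0 < m) (x y : ℝ) : x / m / √(y / m) = x / √(y * m) := by
  rw [show y * m = y / m * m ^ 2 by field_simp, Real.sqrt_mul' _ (sq_nonneg m),
    Real.sqrt_sq hm.le, div_div, mul_comm]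

theorem curvature_eq_of_unit_speed {γ₁ γ₂ : ℝ → ℝ} {τ : ℝ}
    (h₁ : DifferentiableAt ℝ (deriv γ₁) τ) (h₂ : DifferentiableAt ℝ (deriv γ₂) τ)
    (hunit : ∀ t, deriv γ₁ t ^ 2 + deriv γ₂ t ^ 2 = 1)
    (hconv : 0 ≤ deriv γ₁ τ * deriv (deriv γ₂) τ - deriv γ₂ τ * deriv (deriv γ₁) τ) :
    curvature γ₁ γ₂ τ = deriv γ₁ τ * deriv (deriv γ₂) τ - deriv γ₂ τ * deriv (deriv γ₁) τ := by
  have horth := mul_deriv_add_mul_deriv_eq_zero h₁ h₂ hunit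
  rw [curvature, ← Real.sqrt_sq hconv]
  congr 1
  -- Lagrange's identity
  linear_combination (-(deriv (deriv γ₁) τ ^ 2 + deriv (deriv γ₂) τ ^ 2)) * hunit τ
    + (deriv γ₁ τ * deriv (deriv γ₁) τ + deriv γ₂ τ * deriv (deriv γ₂) τ) * horth

theorem deriv_curvature_of_unit_speed {γ₁ γ₂ : ℝ → ℝ} {τ : ℝ}
    (h₁ : Differentiable ℝ (deriv γ₁)) (h₂ : Differentiable ℝ (deriv γ₂))
    (hh₁ : DifferentiableAt ℝ (deriv (deriv γ₁)) τ)
    (hh₂ : DifferentiableAt ℝ (deriv (deriv γ₂)) τ)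
    (hunit : ∀ t, deriv γ₁ t ^ 2 + deriv γ₂ t ^ 2 = 1)
    (hconv : ∀ t, 0 ≤ deriv γ₁ t * deriv (deriv γ₂) t - deriv γ₂ t * deriv (deriv γ₁) t) :
    deriv (curvature γ₁ γ₂) τ =
      deriv γ₁ τ * deriv (deriv (deriv γ₂)) τ - deriv γ₂ τ * deriv (deriv (deriv γ₁)) τ := by
  rw [show curvature γ₁ γ₂ = _ from
    funext fun t ↦ curvature_eq_of_unit_speed (h₁ t) (h₂ t) hunit (hconv t)]
  exact ((h₁ τ).hasDerivAt.mul hh₂.hasDerivAt).sub ((h₂ τ).hasDerivAt.mul hh₁.hasDerivAt)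
    |>.deriv.trans (by ring)

theorem hasDerivAt_chordX {γ₁ γ₂ : ℝ → ℝ} {τ₀ τ : ℝ} (h : DifferentiableAt ℝ γ₂ τ) :
    HasDerivAt (chordX γ₁ γ₂ τ₀) (deriv γ₁ τ₀ / deriv γ₂ τ₀ * deriv γ₂ τ) τ :=
  ((h.hasDerivAt.sub_const _).const_mul _).const_add _

theorem analyticAt_chordX {γ₁ γ₂ : ℝ → ℝ} {τ₀ τ : ℝ} (h : AnalyticAt ℝ γ₂ τ) :
    AnalyticAt ℝ (chordX γ₁ γ₂ τ₀) τ :=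
  analyticAt_const.add (analyticAt_const.mul (h.sub analyticAt_const))

theorem deriv_sub_chordX {γ₁ γ₂ : ℝ → ℝ} (h₁ : Differentiable ℝ γ₁) (h₂ : Differentiable ℝ γ₂)
    (τ₀ : ℝ) : deriv (fun τ ↦ γ₁ τ - chordX γ₁ γ₂ τ₀ τ) =
      fun τ ↦ deriv γ₁ τ - deriv γ₁ τ₀ / deriv γ₂ τ₀ * deriv γ₂ τ :=
  funext fun τ ↦ ((h₁ τ).hasDerivAt.sub (hasDerivAt_chordX (h₂ τ))).deriv

theorem exists_sq_sub_chordX_sq_eq_sub_sq_mul {γ₁ γ₂ : ℝ → ℝ}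
    (hγ₁ : AnalyticOnNhd ℝ γ₁ univ) (hγ₂ : AnalyticOnNhd ℝ γ₂ univ)
    (hunit : ∀ τ, deriv γ₁ τ ^ 2 + deriv γ₂ τ ^ 2 = 1)
    (hconv : ∀ τ, 0 ≤ deriv γ₁ τ * deriv (deriv γ₂) τ - deriv γ₂ τ * deriv (deriv γ₁) τ)
    {τ₀ : ℝ} (hγ₂' : deriv γ₂ τ₀ ≠ 0) :
    ∃ G : ℝ → ℝ, AnalyticAt ℝ G τ₀ ∧
      (∀ τ, γ₁ τ ^ 2 - chordX γ₁ γ₂ τ₀ τ ^ 2 = (τ - τ₀) ^ 2 * G τ) ∧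
      G τ₀ = curvature γ₁ γ₂ τ₀ * γ₁ τ₀ / -deriv γ₂ τ₀ ∧
      deriv G τ₀ = (γ₁ τ₀ * deriv (curvature γ₁ γ₂) τ₀ / 3
        + curvature γ₁ γ₂ τ₀ * deriv γ₁ τ₀) / -deriv γ₂ τ₀ := by
  have diff {f : ℝ → ℝ} (hf : AnalyticOnNhd ℝ f univ) : Differentiable ℝ f :=
    fun τ ↦ (hf τ trivial).differentiableAt
  have d₁ := diff hγ₁; have d₁' := diff hγ₁.deriv; have d₁'' := diff hγ₁.deriv.deriv
  have d₂ := diff hγ₂; have d₂' := diff hγ₂.deriv; have d₂'' := diff hγ₂.deriv.deriv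
  set c := deriv γ₁ τ₀ / deriv γ₂ τ₀
  have hD₁ := deriv_sub_chordX d₁ d₂ τ₀
  have hD₂ : deriv (deriv fun τ ↦ γ₁ τ - chordX γ₁ γ₂ τ₀ τ) =
      fun τ ↦ deriv (deriv γ₁) τ - c * deriv (deriv γ₂) τ := by
    rw [hD₁]; exact deriv_sub_const_mul d₁' d₂' c
  have hD₃ : deriv (deriv (deriv fun τ ↦ γ₁ τ - chordX γ₁ γ₂ τ₀ τ)) =
      fun τ ↦ deriv (deriv (deriv γ₁)) τ - c * deriv (deriv (deriv γ₂)) τ := by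
    rw [hD₂]; exact deriv_sub_const_mul d₁'' d₂'' c
  have hD : AnalyticAt ℝ (fun τ ↦ γ₁ τ - chordX γ₁ γ₂ τ₀ τ) τ₀ :=
    (hγ₁ τ₀ trivial).sub (analyticAt_chordX (hγ₂ τ₀ trivial))
  obtain ⟨g, hg, hfac, hg₀, hg₁⟩ := hD.exists_eq_sub_sq_mul (by simp [chordX])
    (by rw [hD₁]; field_simp; ring)
  have hκ := curvature_eq_of_unit_speed (d₁' τ₀) (d₂' τ₀) hunit (hconv τ₀)
  have hκ' := deriv_curvature_of_unit_speed d₁' d₂' (d₁'' τ₀) (d₂'' τ₀) hunit hconv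
  refine ⟨fun τ ↦ g τ * (γ₁ τ + chordX γ₁ γ₂ τ₀ τ),
    hg.mul ((hγ₁ τ₀ trivial).add (analyticAt_chordX (hγ₂ τ₀ trivial))), fun τ ↦ ?_, ?_, ?_⟩
  · linear_combination (γ₁ τ + chordX γ₁ γ₂ τ₀ τ) * hfac τ
  · dsimp only
    rw [hg₀, hD₂, hκ]
    simp only [chordX, sub_self, mul_zero, add_zero, c]
    field_simp
    ring
  · rw [(hg.differentiableAt.hasDerivAt.fun_mul
      ((d₁ τ₀).hasDerivAt.fun_add (hasDerivAt_chordX (d₂ τ₀)))).deriv,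
      hg₀, hg₁, hD₃, hD₂, hκ, hκ']
    simp only [chordX, sub_self, mul_zero, add_zero, c]
    field_simp
    ring

theorem second_derivative_limit_sectionY_general
    (γ₁ γ₂ : ℝ → ℝ)
    (hγ₁ : AnalyticOnNhd ℝ γ₁ Set.univ) (hγ₂ : AnalyticOnNhd ℝ γ₂ Set.univ)
    (hunit : ∀ τ, (deriv γ₁ τ) ^ 2 + (deriv γ₂ τ) ^ 2 = 1)
    (hconv : ∀ τ, 0 < deriv γ₁ τ * deriv (deriv γ₂) τ - deriv γ₂ τ * deriv (deriv γ₁) τ)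
    (τ₀ : ℝ) (hpos : 0 < γ₁ τ₀) (hγ₂' : deriv γ₂ τ₀ < 0) :
    ∃ δ > 0,
      (∀ τ ∈ Set.Ioo (τ₀ - δ) τ₀, 0 < (γ₁ τ) ^ 2 - (chordX γ₁ γ₂ τ₀ τ) ^ 2) ∧
      (∀ τ ∈ Set.Ioo (τ₀ - δ) τ₀,
        DifferentiableAt ℝ (sectionY γ₁ γ₂ τ₀) τ ∧
        DifferentiableAt ℝ (deriv (sectionY γ₁ γ₂ τ₀)) τ) ∧
      Filter.Tendsto (deriv (deriv (sectionY γ₁ γ₂ τ₀))) (𝓝[<] τ₀)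
        (𝓝 (-(γ₁ τ₀ * deriv (curvature γ₁ γ₂) τ₀ / 3
              + curvature γ₁ γ₂ τ₀ * deriv γ₁ τ₀)
            / Real.sqrt (curvature γ₁ γ₂ τ₀ * γ₁ τ₀ * |deriv γ₂ τ₀|))) := by
  obtain ⟨G, hG, hfac, hG₀, hG₁⟩ := exists_sq_sub_chordX_sq_eq_sub_sq_mul hγ₁ hγ₂ hunit
    (fun τ ↦ (hconv τ).le) hγ₂'.ne
  have hm : 0 < -deriv γ₂ τ₀ := neg_pos.2 hγ₂'
  have hκ : 0 < curvature γ₁ γ₂ τ₀ := by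
    rw [curvature_eq_of_unit_speed (hγ₁.deriv τ₀ trivial).differentiableAt
      (hγ₂.deriv τ₀ trivial).differentiableAt hunit (hconv τ₀).le]
    exact hconv τ₀
  obtain ⟨hev, hlim⟩ := tendsto_deriv_deriv_sqrt_nhdsLT hG (by rw [hG₀]; positivity)
    (Eventually.of_forall hfac)
  obtain ⟨l, hl, hsub⟩ := mem_nhdsLT_iff_exists_Ioo_subset.1 hev
  refine ⟨τ₀ - l, sub_pos.2 hl, fun τ hτ ↦ (hsub ?_).1, fun τ hτ ↦ (hsub ?_).2, ?_⟩
  · rwa [sub_sub_cancel] at hτ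
  · rwa [sub_sub_cancel] at hτ
  · rw [hG₀, hG₁, ← neg_div, div_div_sqrt_div hm] at hlim
    rwa [abs_of_neg hγ₂']

/-- **Left-limit of `y''` at `τ₀`.**
For a real-analytic, unit-speed, positively oriented strictly convex planar curve with
`γ₁(τ₀) > 0`, `γ₁'(τ₀) < 0`, `γ₂'(τ₀) < 0`, there exists `δ > 0` such that
`γ₁(τ)² − x(τ)² > 0` on `(τ₀ − δ, τ₀)`, `y` is twice differentiable on `(τ₀ − δ, τ₀)`,
and `y''(τ) → −(γ₁(τ₀)κ'(τ₀)/3 + κ(τ₀)γ₁'(τ₀)) / √(κ(τ₀)γ₁(τ₀)|γ₂'(τ₀)|)` as `τ → τ₀⁻`. -/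
theorem second_derivative_limit_sectionY
    (γ₁ γ₂ : ℝ → ℝ)
    (hγ₁ : AnalyticOnNhd ℝ γ₁ Set.univ) (hγ₂ : AnalyticOnNhd ℝ γ₂ Set.univ)
    (hunit : ∀ τ, (deriv γ₁ τ) ^ 2 + (deriv γ₂ τ) ^ 2 = 1)
    (hconv : ∀ τ, 0 < deriv γ₁ τ * deriv (deriv γ₂) τ - deriv γ₂ τ * deriv (deriv γ₁) τ)
    (τ₀ : ℝ) (hpos : 0 < γ₁ τ₀) (hγ₁' : deriv γ₁ τ₀ < 0) (hγ₂' : deriv γ₂ τ₀ < 0) :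
    ∃ δ > 0,
      (∀ τ ∈ Set.Ioo (τ₀ - δ) τ₀, 0 < (γ₁ τ) ^ 2 - (chordX γ₁ γ₂ τ₀ τ) ^ 2) ∧
      (∀ τ ∈ Set.Ioo (τ₀ - δ) τ₀,
        DifferentiableAt ℝ (sectionY γ₁ γ₂ τ₀) τ ∧
        DifferentiableAt ℝ (deriv (sectionY γ₁ γ₂ τ₀)) τ) ∧
      Filter.Tendsto (deriv (deriv (sectionY γ₁ γ₂ τ₀))) (𝓝[<] τ₀)
        (𝓝 (-(γ₁ τ₀ * deriv (curvature γ₁ γ₂) τ₀ / 3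
              + curvature γ₁ γ₂ τ₀ * deriv γ₁ τ₀)
            / Real.sqrt (curvature γ₁ γ₂ τ₀ * γ₁ τ₀ * |deriv γ₂ τ₀|))) :=
  second_derivative_limit_sectionY_general γ₁ γ₂ hγ₁ hγ₂ hunit hconv τ₀ hpos hγ₂'
end
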